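/- arXiv:2302.08135 — 3 statements merged into one kernel-verified Lean document; each statement's English description precedes it below -/
import Mathlib

section
/- Consider a seller s whose only potential invitee is agent a, and agent a's only potential invitee is agent b (so the possible networks are the chain s→a and the chain s→a→b). Let M be a mechanism given by: on the one-agent network, an allocation x¹ : ℝ≥0 → {0,1} and a payment p¹ : ℝ≥0 → ℝ (functions of a's reported bid); on the two-agent network, allocations x²_a, x²_b : ℝ≥0 × ℝ≥0 → {0,1} with x²_a(v'_a,v'_b) + x²_b(v'_a,v'_b) ≤ 1 and payments p²_a, p²_b : ℝ≥0 × ℝ≥0 → ℝ (functions of the reported bids (v'_a, v'_b)). Assume M is: (Efficiency) x¹(v) = 1 for every v > 0, and on the two-agent network the item is allocated to the strictly higher bidder whenever v'_a ≠ v'_b; (Individual rationality at truthful reports) for every v_a > 0, v_a − p¹(v_a) ≥ 0, and for all v_a, v_b > 0, v_a·x²_a(v_a,v_b) − p²_a(v_a,v_b) ≥ 0 and v_b·x²_b(v_a,v_b) − p²_b(v_a,v_b) ≥ 0; (Incentive compatibility) an agent a of true type (v_a, child b present) has truthful utility v_a·x²_a(v_a,v_b) − p²_a(v_a,v_b) at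 least v_a·x²_a(v'_a,v_b) − p²_a(v'_a,v_b) for every v'_a ≥ 0 and at least v_a·x¹(v'_a) − p¹(v'_a) for every v'_a ≥ 0 (not inviting b); an agent a of true type (v_a, no child) has v_a·x¹(v_a) − p¹(v_a) ≥ v_a·x¹(v'_a) − p¹(v'_a) for all v'_a ≥ 0; and agent b has v_b·x²_b(v_a,v_b) − p²_b(v_a,v_b) ≥ v_b·x²_b(v_a,v'_b) − p²_b(v_a,v'_b) for all v'_b ≥ 0. Then for all 0 < v_a < v_b the seller's revenue at the truthful profile is strictly negative: p²_a(v_a,v_b) + p²_b(v_a,v_b) < 0. In particular, no mechanism on this network is simultaneously efficient, individually rational, incentive compatible, and weakly budget balanced (nonnegative revenue at all truthful profiles). -/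
/-- Impossibility on the chain network `s → a → b`. A mechanism
consists of an allocation `x1` and payment `p1` on the one-agent network (agent `a`
alone, as functions of `a`'s reported bid), and allocations `x2a, x2b` (with
`x2a + x2b ≤ 1`) and payments `p2a, p2b` on the two-agent network (as functions of
the reported bids `(v'_a, v'_b)`). If the mechanism is efficient, individually
rational at truthful reports, and incentive compatible (including the option for
`a` not to invite `b`), then for all `0 < v_a < v_b` the revenue at the truthful
profile is strictly negative; in particular no such mechanism is weakly budget
balanced. -/
theorem impossibility_efficiency_ir_ic_bb
    (x1 : ℝ → ℝ) (p1 : ℝ → ℝ)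
    (x2a x2b : ℝ → ℝ → ℝ) (p2a p2b : ℝ → ℝ → ℝ)
    -- allocations take values in {0,1} and allocate at most one item
    (halloc1 : ∀ v : ℝ, 0 ≤ v → x1 v = 0 ∨ x1 v = 1)
    (halloc2a : ∀ va vb : ℝ, 0 ≤ va → 0 ≤ vb → x2a va vb = 0 ∨ x2a va vb = 1)
    (halloc2b : ∀ va vb : ℝ, 0 ≤ va → 0 ≤ vb → x2b va vb = 0 ∨ x2b va vb = 1)
    (halloc2 : ∀ va vb : ℝ, 0 ≤ va → 0 ≤ vb → x2a va vb + x2b va vb ≤ 1)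
    -- efficiency
    (heff1 : ∀ v : ℝ, 0 < v → x1 v = 1)
    (heff2a : ∀ va vb : ℝ, 0 ≤ va → 0 ≤ vb → vb < va → x2a va vb = 1)
    (heff2b : ∀ va vb : ℝ, 0 ≤ va → 0 ≤ vb → va < vb → x2b va vb = 1)
    -- individual rationality at truthful reports
    (hIR1 : ∀ va : ℝ, 0 < va → 0 ≤ va - p1 va)
    (hIR2a : ∀ va vb : ℝ, 0 < va → 0 < vb → 0 ≤ va * x2a va vb - p2a va vb)
    (hIR2b : ∀ va vb : ℝ, 0 < va → 0 < vb → 0 ≤ vb * x2b va vb - p2b va vb)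
    -- incentive compatibility
    -- `a` of true type `(v_a, child b present)`: no gain from misreporting the bid …
    (hICa_bid : ∀ va vb va' : ℝ, 0 ≤ va → 0 ≤ vb → 0 ≤ va' →
      va * x2a va' vb - p2a va' vb ≤ va * x2a va vb - p2a va vb)
    -- … and no gain from not inviting `b` (with any bid)
    (hICa_hide : ∀ va vb va' : ℝ, 0 ≤ va → 0 ≤ vb → 0 ≤ va' →
      va * x1 va' - p1 va' ≤ va * x2a va vb - p2a va vb)
    -- `a` of true type `(v_a, no child)`: no gain from misreporting the bid
    (hICa_alone : ∀ va va' : ℝ, 0 ≤ va → 0 ≤ va' →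
      va * x1 va' - p1 va' ≤ va * x1 va - p1 va)
    -- `b`: no gain from misreporting the bid
    (hICb : ∀ va vb vb' : ℝ, 0 ≤ va → 0 ≤ vb → 0 ≤ vb' →
      vb * x2b va vb' - p2b va vb' ≤ vb * x2b va vb - p2b va vb) :
    (∀ va vb : ℝ, 0 < va → va < vb → p2a va vb + p2b va vb < 0) ∧
    ¬ (∀ va vb : ℝ, 0 < va → 0 < vb → 0 ≤ p2a va vb + p2b va vb) := by
  have main : ∀ va vb : ℝ, 0 < va → va < vb → p2a va vb + p2b va vb < 0 := by
    intro va vb hva hab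
    have hvb : 0 < vb := hva.trans hab
    have hp1 : ∀ v : ℝ, 0 < v → p1 v = p1 1 := by
      intro v hv
      have h1 := hICa_alone v 1 hv.le zero_le_one
      have h2 := hICa_alone 1 v zero_le_one hv.le
      rw [heff1 v hv, heff1 1 one_pos] at h1 h2
      nlinarith
    have hc0 : p1 1 ≤ 0 := by
      by_contra h
      push_neg at h
      have h1 := hIR1 (p1 1 / 2) (by linarith)
      have h2 := hp1 (p1 1 / 2) (by linarith)
      linarith
    have hx2a0 : ∀ v : ℝ, 0 ≤ v → v < vb → x2a v vb = 0 := by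
      intro v hv hvlt
      have hb := heff2b v vb hv hvb.le hvlt
      have hle := halloc2 v vb hv hvb.le
      rcases halloc2a v vb hv hvb.le with h | h
      · exact h
      · linarith
    have hA : ∀ v : ℝ, 0 < v → v < vb → p2a va vb ≤ p1 1 - v := by
      intro v hv hvlt
      have h1 := hICa_bid va vb v hva.le hvb.le hv.le
      have h2 := hICa_hide v vb v hv.le hvb.le hv.le
      rw [hx2a0 v hv.le hvlt, hx2a0 va hva.le hab] at h1
      rw [hx2a0 v hv.le hvlt, heff1 v hv] at h2
      have h3 := hp1 v hv
      simp only [mul_zero, mul_one] at h1 h2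
      linarith
    have hA' : p2a va vb ≤ p1 1 - vb := by
      by_contra h
      push_neg at h
      have hd : va ≤ p1 1 - p2a va vb := by linarith [hA va hva hab]
      have := hA ((p1 1 - p2a va vb + vb) / 2) (by linarith) (by linarith)
      linarith
    have hB : ∀ w : ℝ, va < w → p2b va vb ≤ w := by
      intro w hw
      have hw0 : 0 < w := hva.trans hw
      have hx : x2b va w = 1 := heff2b va w hva.le hw0.le hw
      have hxb : x2b va vb = 1 := heff2b va vb hva.le hvb.le hab
      have h1 := hICb va vb w hva.le hvb.le hw0.le
      have h2 := hIR2b va w hva hw0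
      rw [hx] at h1 h2
      rw [hxb] at h1
      simp only [mul_one] at h1 h2
      linarith
    have hB' : p2b va vb ≤ va := by
      by_contra h
      push_neg at h
      have := hB ((va + p2b va vb) / 2) (by linarith)
      linarith
    linarith
  refine ⟨main, fun h => ?_⟩
  have h1 := h 1 2 one_pos (by norm_num)
  have h2 := main 1 2 one_pos (by norm_num)
  linarith
end

section
/- Consider the network N1: seller s with children a and b; a has children c and e; b has children d and f; true valuations satisfy v_d > v_c > v_e > v_f > v_a > v_b > 0. Consider also the merged network N2: seller s with children a and b*, where a has children c and e, and b* is a single agent (representing the coalition {b,d,f}) whose reported bid is a nonnegative real β. Let M be a mechanism defined on (at least) these two networks, assigning on each network and each bid profile a single-item allocation (at most one winner) and real payments, and assume: (Efficiency) on each network the item is allocated to the strictly highest bidder; (Individual rationality) on each network, for every profile of true valuations, truthful bidding gives every agent a nonnegative utility; (Incentive compatibility for b* on N2) for every true valuation v of b*, bidding v yields b* utility at least that of any other bid β, the other agents bidding truthfully. If the revenue of M at the truthful profile on N1 exceeds v_c, then the coalition {b,d,f} strictly gains by merging into the single agent b* bidding β = v_d = max(v_b, v_d, v_f): on N2, b*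 wins the item and pays at most v_c, so the coalition's collusion utility is at least v_d − v_c, which is strictly greater than the coalition's total truthful utility u_b + u_d + u_f on N1. Consequently, any efficient, individually rational, incentive-compatible mechanism that is collusion-proof has revenue at most v_c on this profile, i.e. at most the maximum valuation in the network excluding the subtree of the seller's child that contains the winner. -/
set_option maxHeartbeats 1600000

/-- Revenue upper bound via collusion. Network N1: seller `s` with
children `a, b`; `a` has children `c, e`; `b` has children `d, f`; valuations
`v_d > v_c > v_e > v_f > v_a > v_b > 0`. Agents of N1 are indexed by `Fin 6` as
`0 = a, 1 = b, 2 = c, 3 = d, 4 = e, 5 = f`. Merged network N2: seller `s` with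
children `a` and `b*` (the coalition `{b, d, f}` merged into one agent), `a` having
children `c, e`; agents of N2 are indexed by `Fin 4` as `0 = a, 1 = c, 2 = e,
3 = b*`. A mechanism gives on each network, for each bid profile, a `{0,1}`-valued
allocation with at most one winner and real payments. Assume efficiency (the item
goes to the unique strictly highest bidder), individual rationality at truthful
bids, and incentive compatibility for `b*` on N2. If the revenue at the truthful
profile on N1 exceeds `v_c`, then merging and bidding `β = v_d = max(v_b, v_d, v_f)`
makes `b*` win and pay at most `v_c`, giving the coalition utility at least
`v_d − v_c`, strictly more than its total truthful utility `u_b + u_d + u_f` on N1.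
Consequently a collusion-proof such mechanism has revenue at most `v_c`. -/
theorem revenue_upper_bound_via_collusion
    (va vb vc vd ve vf : ℝ)
    (hvals : vd > vc ∧ vc > ve ∧ ve > vf ∧ vf > va ∧ va > vb ∧ vb > 0)
    -- the mechanism on N1 and on N2: allocations and payments per bid profile
    (x1 : (Fin 6 → ℝ) → Fin 6 → ℝ) (p1 : (Fin 6 → ℝ) → Fin 6 → ℝ)
    (x2 : (Fin 4 → ℝ) → Fin 4 → ℝ) (p2 : (Fin 4 → ℝ) → Fin 4 → ℝ)
    -- single-item {0,1} allocations
    (halloc1 : ∀ b : Fin 6 → ℝ, (∀ i, x1 b i = 0 ∨ x1 b i = 1) ∧ (∑ i, x1 b i) ≤ 1)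
    (halloc2 : ∀ b : Fin 4 → ℝ, (∀ i, x2 b i = 0 ∨ x2 b i = 1) ∧ (∑ i, x2 b i) ≤ 1)
    -- efficiency: on each network the item goes to the strictly highest bidder
    (heff1 : ∀ (b : Fin 6 → ℝ) (i : Fin 6), (∀ j, j ≠ i → b j < b i) → x1 b i = 1)
    (heff2 : ∀ (b : Fin 4 → ℝ) (i : Fin 4), (∀ j, j ≠ i → b j < b i) → x2 b i = 1)
    -- individual rationality: truthful bidding gives everyone nonnegative utility
    (hIR1 : ∀ t : Fin 6 → ℝ, (∀ i, 0 ≤ t i) → ∀ i, 0 ≤ t i * x1 t i - p1 t i)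
    (hIR2 : ∀ t : Fin 4 → ℝ, (∀ i, 0 ≤ t i) → ∀ i, 0 ≤ t i * x2 t i - p2 t i)
    -- incentive compatibility for `b*` on N2 (the others bidding truthfully)
    (hIC2 : ∀ u β : ℝ, 0 ≤ u → 0 ≤ β →
      u * x2 ![va, vc, ve, β] 3 - p2 ![va, vc, ve, β] 3
        ≤ u * x2 ![va, vc, ve, u] 3 - p2 ![va, vc, ve, u] 3) :
    -- if the truthful revenue on N1 exceeds `v_c` the coalition strictly gains …
    ((∑ i, p1 ![va, vb, vc, vd, ve, vf] i) > vc →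
      x2 ![va, vc, ve, vd] 3 = 1 ∧
      p2 ![va, vc, ve, vd] 3 ≤ vc ∧
      vd - vc ≤ vd * x2 ![va, vc, ve, vd] 3 - p2 ![va, vc, ve, vd] 3 ∧
      (vb * x1 ![va, vb, vc, vd, ve, vf] 1 - p1 ![va, vb, vc, vd, ve, vf] 1)
          + (vd * x1 ![va, vb, vc, vd, ve, vf] 3 - p1 ![va, vb, vc, vd, ve, vf] 3)
          + (vf * x1 ![va, vb, vc, vd, ve, vf] 5 - p1 ![va, vb, vc, vd, ve, vf] 5)
        < vd - vc) ∧
    -- … hence collusion-proofness forces revenue at most `v_c`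
    ((∀ β : ℝ, 0 ≤ β →
        vd * x2 ![va, vc, ve, β] 3 - p2 ![va, vc, ve, β] 3
          ≤ (vb * x1 ![va, vb, vc, vd, ve, vf] 1 - p1 ![va, vb, vc, vd, ve, vf] 1)
            + (vd * x1 ![va, vb, vc, vd, ve, vf] 3 - p1 ![va, vb, vc, vd, ve, vf] 3)
            + (vf * x1 ![va, vb, vc, vd, ve, vf] 5 - p1 ![va, vb, vc, vd, ve, vf] 5)) →
      (∑ i, p1 ![va, vb, vc, vd, ve, vf] i) ≤ vc) := by
  obtain ⟨h1, h2, h3, h4, h5, h6⟩ := hvals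
  have hvb : (0:ℝ) < vb := h6
  have hva : (0:ℝ) < va := by linarith
  have hvf : (0:ℝ) < vf := by linarith
  have hve : (0:ℝ) < ve := by linarith
  have hvc : (0:ℝ) < vc := by linarith
  have hvd : (0:ℝ) < vd := by linarith
  set t : Fin 6 → ℝ := ![va, vb, vc, vd, ve, vf] with ht
  have ht0 : t 0 = va := rfl
  have ht1 : t 1 = vb := rfl
  have ht2 : t 2 = vc := rfl
  have ht3 : t 3 = vd := rfl
  have ht4 : t 4 = ve := rfl
  have ht5 : t 5 = vf := rfl
  -- N2: b* bidding vd wins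
  have hx2vd : x2 ![va, vc, ve, vd] 3 = 1 := by
    apply heff2 _ 3
    intro j hj
    fin_cases j
    · exact show va < vd by linarith
    · exact show vc < vd by linarith
    · exact show ve < vd by linarith
    · exact absurd rfl hj
  -- payment bound: p2 at bid vd is at most any u > vc
  have hp2le : ∀ u : ℝ, vc < u → p2 ![va, vc, ve, vd] 3 ≤ u := by
    intro u hu
    have hu0 : (0:ℝ) ≤ u := by linarith
    have hx2u : x2 ![va, vc, ve, u] 3 = 1 := by
      apply heff2 _ 3
      intro j hj
      fin_cases j
      · exact show va < u by linarith
      · exact show vc < u by linarith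
      · exact show ve < u by linarith
      · exact absurd rfl hj
    have hIRu : (0:ℝ) ≤ u * x2 ![va, vc, ve, u] 3 - p2 ![va, vc, ve, u] 3 := by
      have := hIR2 ![va, vc, ve, u] (by
        intro i
        fin_cases i
        · exact show (0:ℝ) ≤ va by linarith
        · exact show (0:ℝ) ≤ vc by linarith
        · exact show (0:ℝ) ≤ ve by linarith
        · exact hu0) 3
      exact this
    rw [hx2u] at hIRu
    have hic := hIC2 vd u (le_of_lt hvd) hu0
    rw [hx2u, hx2vd] at hic
    linarith
  have hp2vc : p2 ![va, vc, ve, vd] 3 ≤ vc := by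
    by_contra h
    push_neg at h
    have := hp2le ((vc + p2 ![va, vc, ve, vd] 3) / 2) (by linarith)
    linarith
  -- N1 truthful facts
  have hx1d : x1 t 3 = 1 := by
    apply heff1 t 3
    intro j hj
    fin_cases j
    · exact show va < vd by linarith
    · exact show vb < vd by linarith
    · exact show vc < vd by linarith
    · exact absurd rfl hj
    · exact show ve < vd by linarith
    · exact show vf < vd by linarith
  have hnn : ∀ i, 0 ≤ x1 t i := by
    intro i; rcases (halloc1 t).1 i with h | h <;> linarith
  have hlose : ∀ k : Fin 6, k ≠ 3 → x1 t k = 0 := by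
    intro k hk
    rcases (halloc1 t).1 k with h | h
    · exact h
    · exfalso
      have hpair : x1 t k + x1 t 3 = ∑ i ∈ ({k, 3} : Finset (Fin 6)), x1 t i :=
        (Finset.sum_pair hk).symm
      have hle : ∑ i ∈ ({k, 3} : Finset (Fin 6)), x1 t i ≤ ∑ i, x1 t i :=
        Finset.sum_le_sum_of_subset_of_nonneg (Finset.subset_univ _)
          (fun i _ _ => hnn i)
      have := (halloc1 t).2
      rw [h, hx1d] at hpair
      linarith
  have hx10 : x1 t 0 = 0 := hlose 0 (by decide)
  have hx11 : x1 t 1 = 0 := hlose 1 (by decide)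
  have hx12 : x1 t 2 = 0 := hlose 2 (by decide)
  have hx14 : x1 t 4 = 0 := hlose 4 (by decide)
  have hx15 : x1 t 5 = 0 := hlose 5 (by decide)
  have hIRt := hIR1 t (by
    intro i
    fin_cases i
    · exact show (0:ℝ) ≤ va by linarith
    · exact show (0:ℝ) ≤ vb by linarith
    · exact show (0:ℝ) ≤ vc by linarith
    · exact show (0:ℝ) ≤ vd by linarith
    · exact show (0:ℝ) ≤ ve by linarith
    · exact show (0:ℝ) ≤ vf by linarith)
  have hIR0 := hIRt 0
  have hIR1' := hIRt 1
  have hIR2' := hIRt 2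
  have hIR3 := hIRt 3
  have hIR4 := hIRt 4
  have hIR5 := hIRt 5
  rw [ht0, hx10] at hIR0
  rw [ht1, hx11] at hIR1'
  rw [ht2, hx12] at hIR2'
  rw [ht3, hx1d] at hIR3
  rw [ht4, hx14] at hIR4
  rw [ht5, hx15] at hIR5
  have hrevsum : (∑ i, p1 t i)
      = p1 t 0 + p1 t 1 + p1 t 2 + p1 t 3 + p1 t 4 + p1 t 5 :=
    Fin.sum_univ_six _
  constructor
  · intro hrev
    rw [hrevsum] at hrev
    refine ⟨hx2vd, hp2vc, by rw [hx2vd]; linarith, ?_⟩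
    rw [hx11, hx1d, hx15]
    nlinarith
  · intro hcp
    by_contra h
    push_neg at h
    have hcpvd := hcp vd (le_of_lt hvd)
    rw [hx2vd, hx11, hx1d, hx15] at hcpvd
    rw [hrevsum] at h
    nlinarith
end

section
/- TRDM is truthful-referral: fix pairwise distinct bids b_i ≥ 0 and an agent i whose bid is at least its true valuation (b_i ≥ v_i ≥ 0). Let E' be any subset of the out-edges of i, and let G' be the tree obtained from G by deleting the edges in E' together with all vertices no longer reachable from s; run TRDM on G' with the remaining agents keeping the same bids. Then agent i's utility under TRDM on G' is at most its utility under TRDM on G. In particular, reporting all of one's children (E' = ∅) weakly dominates hiding any of them. -/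
/-!
Cutting edges out of `i` only removes descendants of `i`, so `V_{-i}`, and with it the
amount `b*_{V_{-i}}` that `i` pays, does not change. What `i` collects is its value if it
wins, and otherwise, when it lies on the path to the winner, the best bid outside the
subtree of its child towards the winner. This can only shrink after the cut: either the
winner survives and the sets shrink, or the winner was cut off, `i` was on its path in `G`,
and every surviving agent lies outside the subtree of the cut child. If `i` wins only after
the cut, its value `v_i ≤ b_i` is dominated by what it collected as an intermediary in `G`.
-/

open Classical

/-- A finite directed tree rooted at the seller `s`: every vertex reaches `s`
by iterating the parent map, and the root is its own parent. The agents are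
the non-root vertices. -/
structure DiffusionTree (α : Type*) where
  s : α
  parent : α → α
  parent_s : parent s = s
  reaches_s : ∀ x : α, ∃ n : ℕ, parent^[n] x = s

namespace DiffusionTree

variable {α : Type*} [Fintype α]

/-- The set of agents: all vertices except the seller. -/
noncomputable def agents (T : DiffusionTree α) : Finset α :=
  Finset.univ.filter (fun x => x ≠ T.s)

/-- `T.desc i j` : `j` is a strict descendant of `i`. -/
def desc (T : DiffusionTree α) (i j : α) : Prop :=
  ∃ n : ℕ, 0 < n ∧ T.parent^[n] j = i

/-- `V_{-i}` relative to the active agent set `A`: remove `i` and its descendants. -/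
noncomputable def Vminus (T : DiffusionTree α) (A : Finset α) (i : α) : Finset α :=
  A.filter (fun j => j ≠ i ∧ ¬ T.desc i j)

/-- `b*_S`: the highest bid in `S`, with `b*_∅ = 0`. -/
noncomputable def bstar (b : α → ℝ) (S : Finset α) : ℝ :=
  WithBot.unbotD 0 ((S.image b).max)

/-- Distance from a vertex to the root. -/
noncomputable def depth (T : DiffusionTree α) (x : α) : ℕ :=
  Nat.find (T.reaches_s x)

/-- The vertex `a_j` on the path `s = a_0, a_1, …, a_k = w` from `s` to `w`. -/
noncomputable def pathVx (T : DiffusionTree α) (w : α) (j : ℕ) : α :=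
  T.parent^[T.depth w - j] w

/-- TRDM payments, on the active agent set `A`, for bids `b` and winner `w`:
the winner pays `b*_{V_{-w}}`; an intermediate path agent `a_j` pays
`b*_{V_{-a_j}} − b*_{V_{-a_{j+1}}}`; everyone else pays `0`. -/
noncomputable def payment (T : DiffusionTree α) (A : Finset α) (b : α → ℝ)
    (w : α) (x : α) : ℝ :=
  if x = w then bstar b (T.Vminus A w)
  else if ∃ j : ℕ, 1 ≤ j ∧ j < T.depth w ∧ T.pathVx w j = x then
    bstar b (T.Vminus A x) - bstar b (T.Vminus A (T.pathVx w (T.depth x + 1)))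
  else 0

/-- TRDM utility of an agent `i` with true valuation `v`. -/
noncomputable def util (T : DiffusionTree α) (A : Finset α) (b : α → ℝ)
    (w : α) (v : ℝ) (i : α) : ℝ :=
  (if i = w then v else 0) - T.payment A b w i

end DiffusionTree

namespace DiffusionTree

variable {α : Type*}

section Bstar

variable {b : α → ℝ} {S S' : Finset α}

lemma le_bstar {j : α} (hj : j ∈ S) : b j ≤ bstar b S :=
  WithBot.le_unbotD (Finset.le_max (Finset.mem_image_of_mem b hj))

lemma bstar_le {x : ℝ} (hx : 0 ≤ x) (h : ∀ j ∈ S, b j ≤ x) : bstar b S ≤ x := by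
  rw [bstar, WithBot.unbotD_le_iff fun _ => hx]
  exact Finset.max_le (by simpa using h)

lemma bstar_nonneg (hb : ∀ j ∈ S, 0 ≤ b j) : 0 ≤ bstar b S := by
  rcases S.eq_empty_or_nonempty with rfl | ⟨j, hj⟩
  · simp [bstar]
  · exact (hb j hj).trans (le_bstar hj)

lemma bstar_mono (hb : ∀ j ∈ S', 0 ≤ b j) (h : S ⊆ S') : bstar b S ≤ bstar b S' :=
  bstar_le (bstar_nonneg hb) fun _ hj => le_bstar (h hj)

end Bstar

lemma eq_of_bid_lt_of_subset {b : α → ℝ} {A A' : Finset α} {w w' : α} (hA : A' ⊆ A)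
    (hwmax : ∀ j ∈ A, j ≠ w → b j < b w) (hw' : w' ∈ A')
    (hw'max : ∀ j ∈ A', j ≠ w' → b j < b w') (hw : w ∈ A') : w' = w := by
  by_contra hne
  exact (hwmax w' (hA hw') hne).asymm (hw'max w hw fun h => hne h.symm)

variable (T : DiffusionTree α) {i j k : α}

lemma iterate_parent_s (n : ℕ) : T.parent^[n] T.s = T.s :=
  Function.iterate_fixed T.parent_s n

lemma iterate_parent_depth (x : α) : T.parent^[T.depth x] x = T.s :=
  Nat.find_spec (T.reaches_s x)

variable {T}

lemma depth_eq_add_of_iterate (hi : i ≠ T.s) {n : ℕ} (h : T.parent^[n] j = i) :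
    T.depth j = T.depth i + n := by
  have hle : T.depth j ≤ T.depth i + n :=
    Nat.find_min' _ (by rw [Function.iterate_add_apply, h, T.iterate_parent_depth])
  have hn : n ≤ T.depth j := by
    by_contra! hlt
    apply hi
    rw [← h, ← Nat.sub_add_cancel hlt.le, Function.iterate_add_apply, T.iterate_parent_depth,
      T.iterate_parent_s]
  have hge : T.depth i ≤ T.depth j - n :=
    Nat.find_min' _ (by rw [← h, ← Function.iterate_add_apply, Nat.sub_add_cancel hn,
      T.iterate_parent_depth])
  omega

lemma depth_pos (hi : i ≠ T.s) : 0 < T.depth i := by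
  by_contra! h
  apply hi
  simpa [Nat.le_zero.mp h] using T.iterate_parent_depth i

lemma desc_irrefl (hi : i ≠ T.s) : ¬ T.desc i i := by
  rintro ⟨n, hn, h⟩
  have := depth_eq_add_of_iterate hi h
  omega

lemma desc_trans (hij : T.desc i j) (hjk : T.desc j k) : T.desc i k := by
  obtain ⟨n, hn, hij⟩ := hij
  obtain ⟨m, hm, hjk⟩ := hjk
  exact ⟨n + m, by omega, by rw [Function.iterate_add_apply, hjk, hij]⟩

lemma desc_of_parent_eq (h : T.parent j = i) : T.desc i j :=
  ⟨1, one_pos, h⟩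

lemma ne_of_desc (hi : i ≠ T.s) (h : T.desc i j) : j ≠ i := by
  rintro rfl
  exact desc_irrefl hi h

lemma not_desc_of_desc (hi : i ≠ T.s) (h : T.desc i j) : ¬ T.desc j i :=
  fun h' => desc_irrefl hi (desc_trans h h')

lemma exists_pathVx_eq_iff_desc {w : α} (hi : i ≠ T.s) :
    (∃ j : ℕ, 1 ≤ j ∧ j < T.depth w ∧ T.pathVx w j = i) ↔ T.desc i w := by
  constructor
  · rintro ⟨j, h1, h2, h3⟩
    exact ⟨T.depth w - j, by omega, h3⟩
  · rintro ⟨n, hn, h⟩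
    have hd := depth_eq_add_of_iterate hi h
    refine ⟨T.depth i, depth_pos hi, by omega, ?_⟩
    rwa [pathVx, show T.depth w - T.depth i = n by omega]

lemma pathVx_depth_succ_of_iterate {w c : α} (hi : i ≠ T.s) (hc : T.parent c = i) {n : ℕ}
    (h : T.parent^[n] w = c) : T.pathVx w (T.depth i + 1) = c := by
  have hcs : c ≠ T.s := by
    rintro rfl
    exact hi (hc.symm.trans T.parent_s)
  have hdc := depth_eq_add_of_iterate hi (n := 1) hc
  have hdw := depth_eq_add_of_iterate hcs h
  rwa [pathVx, show T.depth w - (T.depth i + 1) = n by omega]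

lemma desc_pathVx_depth_succ {w : α} (hi : i ≠ T.s) (h : T.desc i w) :
    T.desc i (T.pathVx w (T.depth i + 1)) := by
  obtain ⟨n, hn, hw⟩ := h
  refine desc_of_parent_eq ?_
  have hd := depth_eq_add_of_iterate hi hw
  rw [pathVx, ← Function.iterate_succ_apply' T.parent, show (T.depth w - (T.depth i + 1)).succ = n
    by omega, hw]

lemma Vminus_subset (A : Finset α) (x : α) : T.Vminus A x ⊆ A :=
  Finset.filter_subset _ _

lemma Vminus_mono {A A' : Finset α} (h : A' ⊆ A) (x : α) : T.Vminus A' x ⊆ T.Vminus A x :=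
  Finset.filter_subset_filter _ h

lemma Vminus_subset_Vminus_of_desc {A : Finset α} (h : T.desc i j) :
    T.Vminus A i ⊆ T.Vminus A j := by
  simp only [Vminus, Finset.subset_iff, Finset.mem_filter]
  rintro k ⟨hk, -, hik⟩
  exact ⟨hk, fun hkj => hik (hkj ▸ h), fun hjk => hik (desc_trans h hjk)⟩

lemma mem_Vminus_of_desc {A : Finset α} (hi : i ≠ T.s) (hiA : i ∈ A) (h : T.desc i j) :
    i ∈ T.Vminus A j :=
  Finset.mem_filter.mpr ⟨hiA, (ne_of_desc hi h).symm, not_desc_of_desc hi h⟩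

section Utility

variable {A : Finset α} {b : α → ℝ} {w : α} {v : ℝ}

lemma util_self : T.util A b i v i = v - bstar b (T.Vminus A i) := by
  simp [util, payment]

/-- `T.pathVx w (T.depth i + 1)` is the child of `i` towards `w`. -/
lemma util_of_desc (hi : i ≠ T.s) (h : T.desc i w) :
    T.util A b w v i =
      bstar b (T.Vminus A (T.pathVx w (T.depth i + 1))) - bstar b (T.Vminus A i) := by
  simp [util, payment, ne_of_desc hi h |>.symm, (exists_pathVx_eq_iff_desc hi).mpr h]

lemma util_of_not_desc (hi : i ≠ T.s) (hiw : i ≠ w) (h : ¬ T.desc i w) :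
    T.util A b w v i = 0 := by
  simp [util, payment, hiw, (exists_pathVx_eq_iff_desc hi).not.mpr h]

lemma util_nonneg_of_ne (hi : i ≠ T.s) (hb : ∀ j ∈ A, 0 ≤ b j) (hiw : i ≠ w) :
    0 ≤ T.util A b w v i := by
  by_cases h : T.desc i w
  · rw [util_of_desc hi h, sub_nonneg]
    exact bstar_mono (fun j hj => hb j (Vminus_subset A _ hj))
      (Vminus_subset_Vminus_of_desc (desc_pathVx_depth_succ hi h))
  · rw [util_of_not_desc hi hiw h]

end Utility

section Pruning

variable [Fintype α] {E : Finset α}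

lemma mem_agents : j ∈ T.agents ↔ j ≠ T.s := by
  simp [agents]

/-- The agents that remain reachable from `s` once the edges into the vertices of `E` are cut. -/
noncomputable def pruned (T : DiffusionTree α) (E : Finset α) : Finset α :=
  T.agents.filter (fun j => ∀ c ∈ E, j ≠ c ∧ ¬ T.desc c j)

lemma pruned_subset : T.pruned E ⊆ T.agents :=
  Finset.filter_subset _ _

lemma self_mem_pruned (hE : ∀ c ∈ E, T.parent c = i) (hi : i ∈ T.agents) : i ∈ T.pruned E := by
  have hi' := mem_agents.mp hi
  refine Finset.mem_filter.mpr ⟨hi, fun c hc => ?_⟩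
  have hic := desc_of_parent_eq (hE c hc)
  exact ⟨(ne_of_desc hi' hic).symm, not_desc_of_desc hi' hic⟩

lemma exists_mem_of_not_mem_pruned (hj : j ∈ T.agents) (hj' : j ∉ T.pruned E) :
    ∃ c ∈ E, j = c ∨ T.desc c j := by
  simpa [pruned, hj, imp_iff_not_or] using hj'

lemma desc_of_not_mem_pruned (hE : ∀ c ∈ E, T.parent c = i) (hj : j ∈ T.agents) (hj' : j ∉ T.pruned E) : T.desc i j := by
  obtain ⟨c, hc, rfl | hcj⟩ := exists_mem_of_not_mem_pruned hj hj'
  · exact desc_of_parent_eq (hE _ hc)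
  · exact desc_trans (desc_of_parent_eq (hE c hc)) hcj

lemma Vminus_pruned_self (hE : ∀ c ∈ E, T.parent c = i) : T.Vminus (T.pruned E) i = T.Vminus T.agents i := by
  refine (Vminus_mono pruned_subset i).antisymm fun j hj => ?_
  obtain ⟨hjA, hji, hij⟩ := Finset.mem_filter.mp hj
  refine Finset.mem_filter.mpr ⟨?_, hji, hij⟩
  by_contra hj'
  exact hij (desc_of_not_mem_pruned hE hjA hj')

/-- A cut-off winner lies below a cut child, which is then the child of `i` towards it. -/
lemma pruned_subset_Vminus_pathVx {w : α} (hE : ∀ c ∈ E, T.parent c = i) (hi : i ≠ T.s) (hw : w ∈ T.agents)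
    (hw' : w ∉ T.pruned E) : T.pruned E ⊆ T.Vminus T.agents (T.pathVx w (T.depth i + 1)) := by
  obtain ⟨c, hc, hcw⟩ := exists_mem_of_not_mem_pruned hw hw'
  have hpath : T.pathVx w (T.depth i + 1) = c := by
    rcases hcw with rfl | ⟨n, -, hn⟩
    exacts [pathVx_depth_succ_of_iterate hi (hE _ hc) (n := 0) rfl,
      pathVx_depth_succ_of_iterate hi (hE c hc) hn]
  rw [hpath]
  intro j hj
  exact Finset.mem_filter.mpr ⟨pruned_subset hj, (Finset.mem_filter.mp hj).2 c hc⟩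

end Pruning

end DiffusionTree

open DiffusionTree in
theorem trdm_truthful_referral_general
    {α : Type*} [Fintype α] (T : DiffusionTree α)
    (b : α → ℝ) (hb : ∀ j ∈ T.agents, 0 ≤ b j)
    (i : α) (hi : i ∈ T.agents)
    (vi : ℝ) (hbid : vi ≤ b i)
    (E' : Finset α) (hE' : ∀ c ∈ E', T.parent c = i)
    -- the winner on the full tree `G`: the unique highest bidder among all agents
    (w : α) (hw : w ∈ T.agents)
    (hwmax : ∀ j ∈ T.agents, j ≠ w → b j < b w)
    -- the winner on the reduced tree `G'`: the unique highest bidder among the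
    -- agents remaining after the subtrees rooted at the children in `E'` are removed
    (w' : α)
    (hw' : w' ∈ T.agents.filter (fun j => ∀ c ∈ E', j ≠ c ∧ ¬ T.desc c j))
    (hw'max : ∀ j ∈ T.agents.filter (fun j => ∀ c ∈ E', j ≠ c ∧ ¬ T.desc c j),
      j ≠ w' → b j < b w') :
    T.util (T.agents.filter (fun j => ∀ c ∈ E', j ≠ c ∧ ¬ T.desc c j)) b w' vi i
      ≤ T.util T.agents b w vi i := by
  change T.util (T.pruned E') b w' vi i ≤ _
  have his : i ≠ T.s := mem_agents.mp hi
  have hw_eq : w ∈ T.pruned E' → w' = w :=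
    eq_of_bid_lt_of_subset pruned_subset hwmax hw' hw'max
  have hbV : ∀ x, ∀ j ∈ T.Vminus T.agents x, 0 ≤ b j := fun x j hj => hb j (Vminus_subset _ x hj)
  by_cases hiw : i = w
  · subst hiw
    rw [hw_eq (self_mem_pruned hE' hi), util_self, util_self, Vminus_pruned_self hE']
  by_cases hiw' : i = w'
  · subst hiw'
    have hwA' : w ∉ T.pruned E' := fun hwA' => hiw (hw_eq hwA')
    have hdw := desc_of_not_mem_pruned hE' hw hwA'
    have hbi := le_bstar (b := b) (mem_Vminus_of_desc his hi (desc_pathVx_depth_succ his hdw))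
    rw [util_self, Vminus_pruned_self hE', util_of_desc his hdw]
    linarith
  by_cases hdw' : T.desc i w'
  · rw [util_of_desc his hdw', Vminus_pruned_self hE']
    by_cases hwA' : w ∈ T.pruned E'
    · rw [← hw_eq hwA', util_of_desc his hdw']
      exact sub_le_sub_right (bstar_mono (hbV _) (Vminus_mono pruned_subset _)) _
    · rw [util_of_desc his (desc_of_not_mem_pruned hE' hw hwA')]
      exact sub_le_sub_right (bstar_mono (hbV _) ((Vminus_subset _ _).trans
        (pruned_subset_Vminus_pathVx hE' his hw hwA'))) _
  · rw [util_of_not_desc his hiw' hdw']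
    exact util_nonneg_of_ne his hb hiw

open DiffusionTree in
/-- TRDM is truthful-referral: fix pairwise distinct nonnegative
bids and an agent `i` whose bid is at least its true valuation (`b_i ≥ v_i ≥ 0`).
Let `E'` be any subset of the out-edges of `i` (identified with the corresponding
set of children of `i`), and let `G'` be the tree obtained by deleting those edges
together with all vertices no longer reachable from `s` (i.e. keep the agents that
are neither a child in `E'` nor a descendant of one); run TRDM on `G'` with the
remaining agents keeping the same bids. Then agent `i`'s utility under TRDM on
`G'` is at most its utility under TRDM on `G`. -/
theorem trdm_truthful_referral
    {α : Type*} [Fintype α] (T : DiffusionTree α)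
    (b : α → ℝ) (hb : ∀ j ∈ T.agents, 0 ≤ b j)
    (hdist : ∀ j ∈ T.agents, ∀ j' ∈ T.agents, j ≠ j' → b j ≠ b j')
    (i : α) (hi : i ∈ T.agents)
    (vi : ℝ) (hvi : 0 ≤ vi) (hbid : vi ≤ b i)
    (E' : Finset α) (hE' : ∀ c ∈ E', T.parent c = i)
    -- the winner on the full tree `G`: the unique highest bidder among all agents
    (w : α) (hw : w ∈ T.agents)
    (hwmax : ∀ j ∈ T.agents, j ≠ w → b j < b w)
    -- the winner on the reduced tree `G'`: the unique highest bidder among the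
    -- agents remaining after the subtrees rooted at the children in `E'` are removed
    (w' : α)
    (hw' : w' ∈ T.agents.filter (fun j => ∀ c ∈ E', j ≠ c ∧ ¬ T.desc c j))
    (hw'max : ∀ j ∈ T.agents.filter (fun j => ∀ c ∈ E', j ≠ c ∧ ¬ T.desc c j),
      j ≠ w' → b j < b w') :
    T.util (T.agents.filter (fun j => ∀ c ∈ E', j ≠ c ∧ ¬ T.desc c j)) b w' vi i
      ≤ T.util T.agents b w vi i :=
  trdm_truthful_referral_general T b hb i hi vi hbid E' hE' w hw hwmax w' hw' hw'max
end
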